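/- For every p ∈ [1, ∞) and every g ∈ L^p(∂T, ν) one has ‖𝒫g‖_{H^p} ≤ ‖g‖_{L^p(∂T,ν)}, i.e. sup_{k ∈ ℤ} Σ_{x : ℓ(x) = k} |𝒫g(x)|^p m_ν(x) ≤ ∫_{∂T} |g|^p dν. -/

import Mathlib

open MeasureTheory
open scoped ENNReal NNReal

/-- The punctured boundary `∂T` of the tree: maps `ω : ℤ → T` with `lev (ω j) = j`
and `par (ω j) = ω (j+1)`. -/
def PBoundary {T : Type*} (par : T → T) (lev : T → ℤ) : Type _ :=
  {ω : ℤ → T // (∀ j : ℤ, lev (ω j) = j) ∧ ∀ j : ℤ, par (ω j) = ω (j + 1)}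

/-- The boundary sector `∂T_x`. -/
def sector {T : Type*} (par : T → T) (lev : T → ℤ) (x : T) : Set (PBoundary par lev) :=
  {ω : PBoundary par lev | ω.1 (lev x) = x}

/-- The σ-algebra on `∂T` generated by the sectors. -/
instance {T : Type*} (par : T → T) (lev : T → ℤ) : MeasurableSpace (PBoundary par lev) :=
  MeasurableSpace.generateFrom (Set.range (sector par lev))

/-- The flow measure `m_ν x = ν (∂T_x)` (as a real number). -/
noncomputable def mnu {T : Type*} (par : T → T) (lev : T → ℤ)
    (ν : Measure (PBoundary par lev)) (x : T) : ℝ :=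
  (ν (sector par lev x)).toReal

/-- The Poisson integral operator `𝒫 g (x) = m_ν(x)⁻¹ ∫_{∂T_x} g dν`. -/
noncomputable def poisson {T : Type*} (par : T → T) (lev : T → ℤ)
    (ν : Measure (PBoundary par lev)) (g : PBoundary par lev → ℝ) (x : T) : ℝ :=
  (mnu par lev ν x)⁻¹ * ∫ ω in sector par lev x, g ω ∂ν

/-! Fix a level `k`. On each sector `∂T_x` with `ℓ(x) = k`, `𝒫g(x)` is the average of `g`, so
Jensen's inequality for the convex function `t ↦ |t|^p` gives
`|𝒫g(x)|^p m_ν(x) ≤ ∫_{∂T_x} |g|^p dν`. The sectors of one level are pairwise disjoint, so summing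
over the level gives at most `∫_{∂T} |g|^p dν`. -/

open Function

namespace MeasureTheory

variable {α : Type*} [MeasurableSpace α] {μ : Measure α} {s : Set α}

theorem MemLp.integrable_abs_rpow {p : ℝ} (hp : 0 < p) {g : α → ℝ}
    (hg : MemLp g (ENNReal.ofReal p) μ) : Integrable (fun x => |g x| ^ p) μ := by
  simpa [ENNReal.toReal_ofReal hp.le] using
    hg.integrable_norm_rpow (by simpa using hp) ENNReal.ofReal_ne_top

theorem abs_setAverage_rpow_le {p : ℝ} (hp : 1 ≤ p) (h0 : μ s ≠ 0) (hs : μ s ≠ ∞) {g : α → ℝ}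
    (hg : MemLp g (ENNReal.ofReal p) (μ.restrict s)) :
    |⨍ x in s, g x ∂μ| ^ p ≤ ⨍ x in s, |g x| ^ p ∂μ := by
  have hp0 : 0 < p := zero_lt_one.trans_le hp
  have : IsFiniteMeasure (μ.restrict s) := isFiniteMeasure_restrict.mpr hs
  have hgi : IntegrableOn g s μ := hg.integrable (by simpa using ENNReal.one_le_ofReal.mpr hp)
  calc |⨍ x in s, g x ∂μ| ^ p ≤ (⨍ x in s, |g x| ∂μ) ^ p := by
        gcongr; exact abs_integral_le_integral_abs
    _ ≤ ⨍ x in s, |g x| ^ p ∂μ :=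
      (convexOn_rpow hp).map_set_average_le (continuousOn_id.rpow_const fun _ _ => Or.inr hp0.le)
        isClosed_Ici h0 hs (.of_forall fun x => abs_nonneg (g x)) hgi.abs
        (hg.integrable_abs_rpow hp0)

theorem ofReal_abs_setAverage_rpow_mul_le {p : ℝ} (hp : 1 ≤ p) (h0 : μ s ≠ 0) (hs : μ s ≠ ∞)
    {g : α → ℝ} (hg : MemLp g (ENNReal.ofReal p) (μ.restrict s)) :
    ENNReal.ofReal (|⨍ x in s, g x ∂μ| ^ p) * μ s ≤ ∫⁻ x in s, ENNReal.ofReal (|g x| ^ p) ∂μ := by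
  rw [← ofReal_integral_eq_lintegral_ofReal (hg.integrable_abs_rpow (by linarith))
      (.of_forall fun x => by positivity),
    ← ofReal_measureReal hs, ← ENNReal.ofReal_mul (by positivity)]
  gcongr
  calc |⨍ x in s, g x ∂μ| ^ p * μ.real s ≤ μ.real s • ⨍ x in s, |g x| ^ p ∂μ := by
        rw [smul_eq_mul, mul_comm]; gcongr; exact abs_setAverage_rpow_le hp h0 hs hg
    _ = ∫ x in s, |g x| ^ p ∂μ := measure_smul_setAverage _ hs

theorem tsum_setLIntegral_le_lintegral {ι : Type*} {t : ι → Set α}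
    (ht : ∀ i, MeasurableSet (t i)) (hd : Pairwise (Disjoint on t)) (f : α → ℝ≥0∞) :
    ∑' i, ∫⁻ x in t i, f x ∂μ ≤ ∫⁻ x, f x ∂μ := by
  simp_rw [← withDensity_apply f (ht _)]
  calc ∑' i, μ.withDensity f (t i) ≤ μ.withDensity f (⋃ i, t i) :=
        tsum_meas_le_meas_iUnion_of_disjoint _ ht hd
    _ ≤ μ.withDensity f Set.univ := measure_mono (Set.subset_univ _)
    _ = ∫⁻ x, f x ∂μ := by rw [withDensity_apply _ MeasurableSet.univ, Measure.restrict_univ]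

end MeasureTheory

section Tree

variable {T : Type*} {par : T → T} {lev : T → ℤ}

theorem measurableSet_sector (x : T) : MeasurableSet (sector par lev x) :=
  MeasurableSpace.measurableSet_generateFrom ⟨x, rfl⟩

theorem pairwise_disjoint_sector_level (k : ℤ) :
    Pairwise (Disjoint on fun x : {x : T // lev x = k} => sector par lev x.1) := by
  intro a b hab
  refine Set.disjoint_left.mpr fun ω ha hb => hab (Subtype.ext ?_)
  simp only [sector, Set.mem_ofPred_eq, a.2, b.2] at ha hb
  exact ha.symm.trans hb

theorem poisson_eq_setAverage (ν : Measure (PBoundary par lev)) (g : PBoundary par lev → ℝ)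
    (x : T) : poisson par lev ν g x = ⨍ ω in sector par lev x, g ω ∂ν := by
  rw [poisson, mnu, setAverage_eq, smul_eq_mul, measureReal_def]

end Tree

theorem stmt5_general {T : Type*} (par : T → T) (lev : T → ℤ)
    (ν : Measure (PBoundary par lev))
    (hν : ∀ x : T, 0 < ν (sector par lev x) ∧ ν (sector par lev x) < ⊤)
    (p : ℝ) (hp : 1 ≤ p)
    (g : PBoundary par lev → ℝ) (hg : MemLp g (ENNReal.ofReal p) ν) :
    ⨆ k : ℤ, ∑' x : {x : T // lev x = k},
        ENNReal.ofReal (|poisson par lev ν g x.1| ^ p) * ν (sector par lev x.1)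
      ≤ ∫⁻ ω, ENNReal.ofReal (|g ω| ^ p) ∂ν := by
  refine iSup_le fun k => ?_
  calc ∑' x : {x : T // lev x = k},
        ENNReal.ofReal (|poisson par lev ν g x.1| ^ p) * ν (sector par lev x.1)
      ≤ ∑' x : {x : T // lev x = k}, ∫⁻ ω in sector par lev x.1, ENNReal.ofReal (|g ω| ^ p) ∂ν :=
        ENNReal.tsum_le_tsum fun x => by
          rw [poisson_eq_setAverage]
          exact ofReal_abs_setAverage_rpow_mul_le hp (hν x).1.ne' (hν x).2.ne (hg.restrict _)
    _ ≤ ∫⁻ ω, ENNReal.ofReal (|g ω| ^ p) ∂ν :=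
        tsum_setLIntegral_le_lintegral (fun _ => measurableSet_sector _)
          (pairwise_disjoint_sector_level k) _

/-- For every `p ∈ [1,∞)` and `g ∈ L^p(∂T,ν)` one has
`‖𝒫g‖_{H^p}^p = sup_k Σ_{ℓ(x)=k} |𝒫g(x)|^p m_ν(x) ≤ ∫_{∂T} |g|^p dν`. -/
theorem stmt5 {T : Type*} [Nonempty T] (par : T → T) (lev : T → ℤ)
    (hlev : ∀ x : T, lev (par x) = lev x + 1)
    (hfin : ∀ x : T, {y : T | par y = x}.Finite)
    (hsucc : ∀ x : T, ∃ y : T, par y = x)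
    (hconn : ∀ x y : T, ∃ n m : ℕ, par^[n] x = par^[m] y)
    (ν : Measure (PBoundary par lev))
    (hν : ∀ x : T, 0 < ν (sector par lev x) ∧ ν (sector par lev x) < ⊤)
    (p : ℝ) (hp : 1 ≤ p)
    (g : PBoundary par lev → ℝ) (hg : MemLp g (ENNReal.ofReal p) ν) :
    ⨆ k : ℤ, ∑' x : {x : T // lev x = k},
        ENNReal.ofReal (|poisson par lev ν g x.1| ^ p) * ν (sector par lev x.1)
      ≤ ∫⁻ ω, ENNReal.ofReal (|g ω| ^ p) ∂ν :=
  stmt5_general par lev ν hν p hp g hg
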